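/- Let u⁻ᵃ, f be C¹ with f, u⁻ᵃ satisfying Assumption 2, and let φ⁻ be defined as in equation (2.2). Then φ⁻ satisfies the first-order PDE φ⁻·(∂φ⁻/∂x + ∂φ⁻/∂y + ∂φ⁻/∂z) = f(x,y,z) on ℝ² × (-a,a). -/

import Mathlib

/-!
Write `φ⁻ = -√Φ`. Along the characteristic `t ↦ (x + t, y + t, z + t)` the first term of `Φ` is
constant and the second is `2 ∫₀^{a+z+t}` of a fixed continuous function, so the derivative of `Φ`
in the direction `(1, 1, 1)` is `2 f` by the fundamental theorem of calculus, and
`φ⁻ · ∂_{(1,1,1)} φ⁻ = ½ ∂_{(1,1,1)} Φ = f`. Since `Φ > 0` by Assumption 2, differentiability of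
`φ⁻` reduces to that of `Φ`: rescaling the integral to `[0, 1]` makes it a parametric integral of a
`C¹` integrand over a fixed interval, hence differentiable in `(x, y, z)`.
-/

open Set intervalIntegral MeasureTheory Metric

section ParametricIntegral

variable {H E : Type*} [NormedAddCommGroup H] [NormedSpace ℝ H] [ProperSpace H]
  [NormedAddCommGroup E] [NormedSpace ℝ E]

theorem hasFDerivAt_intervalIntegral_of_contDiff {F : H × ℝ → E} (hF : ContDiff ℝ 1 F)
    (a b : ℝ) (x₀ : H) :
    HasFDerivAt (fun x => ∫ t in a..b, F (x, t))
      (∫ t in a..b, fderiv ℝ F (x₀, t) ∘L ContinuousLinearMap.inl ℝ H ℝ) x₀ := by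
  have hF' : Continuous fun p : H × ℝ => fderiv ℝ F p ∘L ContinuousLinearMap.inl ℝ H ℝ :=
    (hF.continuous_fderiv one_ne_zero).clm_comp continuous_const
  obtain ⟨C, hC⟩ := ((isCompact_closedBall x₀ 1).prod isCompact_uIcc).exists_bound_of_continuousOn
    hF'.continuousOn
  refine hasFDerivAt_integral_of_dominated_of_fderiv_le (bound := fun _ => C)
    (ball_mem_nhds x₀ one_pos)
    (.of_forall fun x => (hF.continuous.comp (by fun_prop)).aestronglyMeasurable)
    ((hF.continuous.comp (by fun_prop)).intervalIntegrable a b)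
    (hF'.comp (by fun_prop)).aestronglyMeasurable
    (ae_of_all _ fun t ht x hx => hC (x, t) ⟨ball_subset_closedBall hx, uIoc_subset_uIcc ht⟩)
    intervalIntegrable_const (ae_of_all _ fun t _ x _ => ?_)
  exact (hF.differentiable one_ne_zero (x, t)).hasFDerivAt.comp x (hasFDerivAt_prodMk_left x t)

theorem differentiable_parametric_primitive_of_contDiff {F : H × ℝ → E} (hF : ContDiff ℝ 1 F)
    {g : H → ℝ} (hg : ContDiff ℝ 1 g) (c : ℝ) :
    Differentiable ℝ fun x => ∫ t in c..g x, F (x, t) := by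
  have hrescale : ∀ x, ∫ t in c..g x, F (x, t) =
      (g x - c) • ∫ σ in (0 : ℝ)..1, F (x, (g x - c) * σ + c) := by
    intro x
    rw [smul_integral_comp_mul_add (f := fun t => F (x, t))]
    simp
  simp_rw [hrescale]
  have hG : ContDiff ℝ 1 fun p : H × ℝ => F (p.1, (g p.1 - c) * p.2 + c) :=
    hF.comp (by fun_prop)
  exact fun x => ((hg.differentiable one_ne_zero x).sub_const c).smul
    (hasFDerivAt_intervalIntegral_of_contDiff hG 0 1 x).differentiableAt

end ParametricIntegral

theorem neg_sqrt_mul_fderiv_neg_sqrt {E : Type*} [NormedAddCommGroup E] [NormedSpace ℝ E]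
    {Φ : E → ℝ} {p : E} (hΦ : DifferentiableAt ℝ Φ p) (hp : 0 < Φ p) (v : E) :
    -√(Φ p) * fderiv ℝ (fun q => -√(Φ q)) p v = fderiv ℝ Φ p v / 2 := by
  rw [(hΦ.hasFDerivAt.sqrt hp.ne').fun_neg.fderiv]
  have : √(Φ p) ≠ 0 := (Real.sqrt_pos.2 hp).ne'
  simp only [neg_apply, smul_apply, smul_eq_mul]
  field_simp

section CharacteristicFormula

variable (a : ℝ) (u : ℝ × ℝ → ℝ) (f : ℝ × ℝ × ℝ → ℝ)

/-- The radicand of `φ⁻ = -√Φ` in the characteristic formula (2.2). -/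
noncomputable def characteristicRadicand (p : ℝ × ℝ × ℝ) : ℝ :=
  u (p.1 - a - p.2.2, p.2.1 - a - p.2.2) ^ 2 +
    2 * ∫ s in (0 : ℝ)..(a + p.2.2), f (p.1 - a - p.2.2 + s, p.2.1 - a - p.2.2 + s, -a + s)

variable {u f}

theorem differentiable_characteristicRadicand (hu : ContDiff ℝ 1 u) (hf : ContDiff ℝ 1 f) :
    Differentiable ℝ (characteristicRadicand a u f) := by
  have hF : ContDiff ℝ 1 fun q : (ℝ × ℝ × ℝ) × ℝ =>
      f (q.1.1 - a - q.1.2.2 + q.2, q.1.2.1 - a - q.1.2.2 + q.2, -a + q.2) :=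
    hf.comp (by fun_prop)
  exact (((hu.comp (by fun_prop)).differentiable one_ne_zero).pow 2).add
    ((differentiable_parametric_primitive_of_contDiff hF (g := fun p => a + p.2.2)
      (by fun_prop) 0).const_mul 2)

theorem hasLineDerivAt_characteristicRadicand (hf : Continuous f) (x y z : ℝ) :
    HasLineDerivAt ℝ (characteristicRadicand a u f) (2 * f (x, y, z)) (x, y, z) (1, 1, 1) := by
  have hcont : Continuous fun s => f (x - a - z + s, y - a - z + s, -a + s) :=
    hf.comp (by fun_prop)
  have hFTC := ((hcont.integral_hasStrictDerivAt 0 (a + z + 0)).hasDerivAt.comp_const_add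
    (a + z) 0).const_mul 2 |>.const_add (u (x - a - z, y - a - z) ^ 2)
  have hend : f (x - a - z + (a + z + 0), y - a - z + (a + z + 0), -a + (a + z + 0)) =
      f (x, y, z) := by ring_nf
  rw [hend] at hFTC
  unfold HasLineDerivAt
  convert hFTC using 2 with t
  simp only [characteristicRadicand, Prod.smul_mk, Prod.mk_add_mk, smul_eq_mul, mul_one]
  ring_nf

end CharacteristicFormula

theorem stmt_6_general (a : ℝ)
    (uma : ℝ × ℝ → ℝ) (f : ℝ × ℝ × ℝ → ℝ)
    (huma : ContDiff ℝ 1 uma) (hf : ContDiff ℝ 1 f)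
    (hA2 : ∀ x y z : ℝ, z ∈ Icc (-a) a →
      (uma (x - a - z, y - a - z)) ^ 2 >
        -2 * ∫ s in (0 : ℝ)..(a + z), f (x - a - z + s, y - a - z + s, -a + s))
    (φm : ℝ × ℝ × ℝ → ℝ)
    (hφ : ∀ x y z : ℝ, φm (x, y, z) =
      -Real.sqrt ((uma (x - a - z, y - a - z)) ^ 2 +
        2 * ∫ s in (0 : ℝ)..(a + z), f (x - a - z + s, y - a - z + s, -a + s))) :
    ∀ x y z : ℝ, z ∈ Ioo (-a) a →
      φm (x, y, z) *
          (fderiv ℝ φm (x, y, z) (1, 0, 0) + fderiv ℝ φm (x, y, z) (0, 1, 0) +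
            fderiv ℝ φm (x, y, z) (0, 0, 1)) = f (x, y, z) := by
  intro x y z hz
  have hφΦ : φm = fun p => -√(characteristicRadicand a uma f p) :=
    funext fun ⟨p, q, r⟩ => hφ p q r
  have hΦdiff := differentiable_characteristicRadicand a huma hf (x, y, z)
  have hΦpos : 0 < characteristicRadicand a uma f (x, y, z) := by
    have := hA2 x y z (Ioo_subset_Icc_self hz)
    rw [characteristicRadicand]
    linarith
  have hsum : ∀ L : ℝ × ℝ × ℝ →L[ℝ] ℝ,
      L (1, 0, 0) + L (0, 1, 0) + L (0, 0, 1) = L (1, 1, 1) := by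
    intro L
    rw [← map_add, ← map_add]
    norm_num
  subst hφΦ
  rw [hsum, neg_sqrt_mul_fderiv_neg_sqrt hΦdiff hΦpos,
    (hΦdiff.hasFDerivAt.hasLineDerivAt _).unique
      (hasLineDerivAt_characteristicRadicand a hf.continuous x y z)]
  ring

/-- The explicit characteristic formula φ⁻ solves the reduced stationary PDE
    φ⁻ (φ⁻_x + φ⁻_y + φ⁻_z) = f on ℝ² × (-a,a). -/
theorem stmt_6 (a : ℝ) (ha : 0 < a)
    (uma : ℝ × ℝ → ℝ) (f : ℝ × ℝ × ℝ → ℝ)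
    (huma : ContDiff ℝ 1 uma) (hf : ContDiff ℝ 1 f)
    (hA2 : ∀ x y z : ℝ, z ∈ Icc (-a) a →
      (uma (x - a - z, y - a - z)) ^ 2 >
        -2 * ∫ s in (0 : ℝ)..(a + z), f (x - a - z + s, y - a - z + s, -a + s))
    (φm : ℝ × ℝ × ℝ → ℝ)
    (hφ : ∀ x y z : ℝ, φm (x, y, z) =
      -Real.sqrt ((uma (x - a - z, y - a - z)) ^ 2 +
        2 * ∫ s in (0 : ℝ)..(a + z), f (x - a - z + s, y - a - z + s, -a + s))) :
    ∀ x y z : ℝ, z ∈ Ioo (-a) a →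
      φm (x, y, z) *
          (fderiv ℝ φm (x, y, z) (1, 0, 0) + fderiv ℝ φm (x, y, z) (0, 1, 0) +
            fderiv ℝ φm (x, y, z) (0, 0, 1)) = f (x, y, z) :=
  stmt_6_general a uma f huma hf hA2 φm hφ
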